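/- For every γ ∈ (0,2), every a ∈ (0,1) and every φ* ∈ (−π,π] with cos(φ*) = 2a−1, the strict Jensen inequality F(φ*) > a·F(0) + (1−a)·F(π) holds; in particular the functions k ↦ D_k(0) and k ↦ D_k(π) are not equal Lebesgue-almost everywhere on [−π,π]². -/

import Mathlib

open MeasureTheory Real Filter

noncomputable section
open scoped Classical

/-- The momentum-space box `[-π,π]²`. -/
def box : Set (ℝ × ℝ) := Set.Icc (-π) π ×ˢ Set.Icc (-π) π

/-- The spin-wave "symbol" `D_k(φ*)` for coupling ratio `γ`. -/
def D (γ φ : ℝ) (k : ℝ × ℝ) : ℝ :=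
  ‖1 - Complex.exp (Complex.I * ((k.1 : ℂ) + (k.2 : ℂ)))‖ ^ 2
    + ‖1 - Complex.exp (Complex.I * ((k.1 : ℂ) - (k.2 : ℂ)))‖ ^ 2
    + γ * Real.cos φ *
      (‖1 - Complex.exp (Complex.I * (k.1 : ℂ))‖ ^ 2
        - ‖1 - Complex.exp (Complex.I * (k.2 : ℂ))‖ ^ 2)

/-- The spin-wave free energy `F(φ*) = (1/2)∫_{[-π,π]²} log D_k(φ*) dk/(2π)²`. -/
def F (γ φ : ℝ) : ℝ := (1 / 2) * ((2 * π) ^ 2)⁻¹ * ∫ k in box, Real.log (D γ φ k)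

/-- The massive spin-wave free energy `F(φ*,λ)`. -/
def Fm (γ φ lam : ℝ) : ℝ :=
  (1 / 2) * ((2 * π) ^ 2)⁻¹ * ∫ k in box, Real.log (lam + D γ φ k)


/-! ### Auxiliary lemmas -/

lemma sq_abs_one_sub_exp (θ : ℝ) :
    ‖1 - Complex.exp (Complex.I * θ)‖ ^ 2 = 2 - 2 * Real.cos θ := by
  rw [mul_comm, Complex.exp_mul_I, Complex.sq_norm, Complex.normSq_apply]
  simp only [Complex.sub_re, Complex.add_re, Complex.one_re, Complex.mul_re,
    Complex.I_re, Complex.I_im, Complex.sub_im, Complex.add_im, Complex.one_im,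
    Complex.mul_im, Complex.cos_ofReal_re, Complex.cos_ofReal_im,
    Complex.sin_ofReal_re, Complex.sin_ofReal_im]
  nlinarith [Real.sin_sq_add_cos_sq θ]

lemma D_eq (γ φ : ℝ) (k : ℝ × ℝ) :
    D γ φ k = 4 - 4 * (Real.cos k.1 * Real.cos k.2)
      + 2 * (γ * Real.cos φ) * (Real.cos k.2 - Real.cos k.1) := by
  have h1 : ((k.1 : ℂ) + (k.2 : ℂ)) = ((k.1 + k.2 : ℝ) : ℂ) := by push_cast; ring
  have h2 : ((k.1 : ℂ) - (k.2 : ℂ)) = ((k.1 - k.2 : ℝ) : ℂ) := by push_cast; ring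
  rw [D, h1, h2, sq_abs_one_sub_exp, sq_abs_one_sub_exp, sq_abs_one_sub_exp,
    sq_abs_one_sub_exp, Real.cos_add, Real.cos_sub]
  ring

lemma abs_diff_le' (u v : ℝ) (hu0 : 0 ≤ u) (hu2 : u ≤ 2) (hv0 : 0 ≤ v) (hv2 : v ≤ 2) :
    |u - v| ≤ u + v - u * v := by
  rcases abs_cases (u - v) with ⟨h, _⟩ | ⟨h, _⟩ <;> rw [h] <;> nlinarith

lemma D_bounds {γ : ℝ} (φ : ℝ) (hγ0 : 0 ≤ γ) (hγ2 : γ ≤ 2) (k : ℝ × ℝ) :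
    (1 - γ / 2) * (4 * (|Real.sin k.1| * |Real.sin k.2|)) ≤ D γ φ k ∧ D γ φ k ≤ 16 := by
  set c1 := Real.cos k.1
  set c2 := Real.cos k.2
  have hc1 : -1 ≤ c1 := Real.neg_one_le_cos k.1
  have hc1' : c1 ≤ 1 := Real.cos_le_one k.1
  have hc2 : -1 ≤ c2 := Real.neg_one_le_cos k.2
  have hc2' : c2 ≤ 1 := Real.cos_le_one k.2
  have hE : |Real.sin k.1| * |Real.sin k.2| ≤ 1 - c1 * c2 := by
    rw [← abs_mul]
    rcases abs_cases (Real.sin k.1 * Real.sin k.2) with ⟨h, _⟩ | ⟨h, _⟩ <;> rw [h]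
    · have := Real.cos_le_one (k.1 - k.2)
      rw [Real.cos_sub] at this; linarith
    · have := Real.cos_le_one (k.1 + k.2)
      rw [Real.cos_add] at this; linarith
  have habs : |2 * (γ * Real.cos φ) * (c2 - c1)| ≤ (γ / 2) * (4 - 4 * (c1 * c2)) := by
    have h1 : |γ * Real.cos φ| ≤ γ := by
      rw [abs_mul, abs_of_nonneg hγ0]
      nlinarith [Real.abs_cos_le_one φ, abs_nonneg (Real.cos φ)]
    have h2 : |c2 - c1| ≤ (1 - c1) + (1 - c2) - (1 - c1) * (1 - c2) := by
      have := abs_diff_le' (1 - c1) (1 - c2) (by linarith) (by linarith) (by linarith)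
        (by linarith)
      rw [show (1 - c1) - (1 - c2) = c2 - c1 by ring] at this
      exact this
    rw [abs_mul, abs_mul]
    have h3 : |(2:ℝ)| = 2 := by norm_num
    rw [h3]
    nlinarith [abs_nonneg (c2 - c1), abs_nonneg (γ * Real.cos φ),
      mul_le_mul h1 h2 (abs_nonneg _) hγ0]
  rw [D_eq]
  constructor
  · have := neg_abs_le (2 * (γ * Real.cos φ) * (c2 - c1))
    nlinarith [mul_le_mul_of_nonneg_left hE (by norm_num : (0:ℝ) ≤ 4),
      mul_le_mul_of_nonneg_left (mul_le_mul_of_nonneg_left hE (by norm_num : (0:ℝ) ≤ 4))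
        (by linarith : 0 ≤ 1 - γ / 2)]
  · have h4 := le_abs_self (2 * (γ * Real.cos φ) * (c2 - c1))
    have hs1 : (0:ℝ) ≤ (1 - c1) * (c1 + 1) := mul_nonneg (by linarith) (by linarith)
    have hs2 : (0:ℝ) ≤ (1 - c2) * (c2 + 1) := mul_nonneg (by linarith) (by linarith)
    have hE0 : (0:ℝ) ≤ 4 - 4 * (c1 * c2) := by nlinarith [sq_nonneg (c1 - c2)]
    have hE8 : 4 - 4 * (c1 * c2) ≤ 8 := by nlinarith [sq_nonneg (c1 + c2)]
    have : (γ / 2) * (4 - 4 * (c1 * c2)) ≤ 4 - 4 * (c1 * c2) := by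
      nlinarith
    linarith

lemma log_abs_bound {x c : ℝ} (hx : 0 < x) (hxc : x ≤ c) :
    |Real.log x| ≤ 2 * x ^ (-(1:ℝ)/2) + |Real.log c| := by
  have hrp : (0:ℝ) < x ^ (-(1:ℝ)/2) := Real.rpow_pos_of_pos hx _
  rcases le_or_gt 1 x with h1 | h1
  · rw [abs_of_nonneg (Real.log_nonneg h1)]
    have h2 : Real.log x ≤ Real.log c := Real.log_le_log hx hxc
    have h3 : Real.log c ≤ |Real.log c| := le_abs_self _
    linarith
  · rw [abs_of_nonpos (Real.log_nonpos hx.le h1.le)]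
    have h2 : Real.log (x ^ (-(1:ℝ)/2)) ≤ x ^ (-(1:ℝ)/2) - 1 :=
      Real.log_le_sub_one_of_pos hrp
    rw [Real.log_rpow hx] at h2
    have h3 : (0:ℝ) ≤ |Real.log c| := abs_nonneg _
    nlinarith

lemma intervalIntegrable_log_abs (A B : ℝ) :
    IntervalIntegrable (fun x => Real.log |x|) volume A B := by
  suffices h : ∀ c : ℝ, IntervalIntegrable (fun x => Real.log |x|) volume 0 c by
    exact (h A).symm.trans (h B)
  have key : ∀ c : ℝ, 0 ≤ c → IntervalIntegrable (fun x => Real.log |x|) volume 0 c := by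
    intro c hc
    rw [intervalIntegrable_iff_integrableOn_Ioc_of_le hc]
    have hg : IntegrableOn (fun x : ℝ => 2 * x ^ (-(1:ℝ)/2) + |Real.log (c+1)|)
        (Set.Ioc 0 c) volume := by
      apply Integrable.add
      · exact ((intervalIntegral.intervalIntegrable_rpow' (by norm_num) (a := 0)
          (b := c)).def'.mono_set (by rw [Set.uIoc_of_le hc])).const_mul 2
      · exact integrableOn_const measure_Ioc_lt_top.ne
    refine Integrable.mono hg ?_ ?_
    · exact ((Real.measurable_log.comp measurable_abs).aestronglyMeasurable)
    · filter_upwards [ae_restrict_mem measurableSet_Ioc] with x hx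
      have hx0 : 0 < x := hx.1
      rw [abs_of_pos hx0, Real.norm_eq_abs, Real.norm_eq_abs]
      have hb := log_abs_bound hx0 (by linarith [hx.2] : x ≤ c + 1)
      have : 0 < x ^ (-(1:ℝ)/2) := Real.rpow_pos_of_pos hx0 _
      rw [abs_of_nonneg (by positivity : (0:ℝ) ≤ 2 * x ^ (-(1:ℝ)/2) + |Real.log (c+1)|)]
      exact hb
  intro c
  rcases le_total 0 c with hc | hc
  · exact key c hc
  · have h2 := key (-c) (by linarith)
    rw [IntervalIntegrable.iff_comp_neg] at h2
    simpa using h2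

lemma integrableOn_log_abs_sub (c A B : ℝ) :
    IntegrableOn (fun x => Real.log |x - c|) (Set.Icc A B) volume := by
  rcases le_total A B with hAB | hAB
  · have h := (intervalIntegrable_log_abs (A - c) (B - c)).comp_sub_right c
    rw [sub_add_cancel, sub_add_cancel] at h
    rw [integrableOn_Icc_iff_integrableOn_Ioc]
    exact (intervalIntegrable_iff_integrableOn_Ioc_of_le hAB).mp h
  · rcases lt_or_ge B A with h | h
    · simp [Set.Icc_eq_empty_of_lt h, IntegrableOn]
    · have : A = B := le_antisymm h hAB
      subst this
      simp [Set.Icc_self, IntegrableOn, Measure.restrict_singleton]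

lemma sin_cubic_lower {x : ℝ} (h0 : 0 ≤ x) (h1 : x ≤ π) :
    x * ((π - x) * (x + π)) ≤ π ^ 3 * Real.sin x := by
  rcases le_or_gt x (π / 2) with h2 | h2
  · have hs := Real.mul_le_sin h0 h2
    have hπ := Real.pi_pos
    have h3 : 2 * x ≤ π * Real.sin x := by
      rw [div_mul_eq_mul_div, div_le_iff₀ hπ] at hs
      linarith [hs]
    nlinarith [sq_nonneg x, sq_nonneg π, mul_nonneg h0 (sq_nonneg x),
      mul_le_mul_of_nonneg_left h3 (sq_nonneg π)]
  · have h0' : 0 ≤ π - x := by linarith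
    have h2' : π - x ≤ π / 2 := by linarith
    have hs := Real.mul_le_sin h0' h2'
    rw [Real.sin_pi_sub] at hs
    have hπ := Real.pi_pos
    have h3 : 2 * (π - x) ≤ π * Real.sin x := by
      rw [div_mul_eq_mul_div, div_le_iff₀ hπ] at hs
      linarith [hs]
    nlinarith [sq_nonneg π, mul_le_mul_of_nonneg_left h3 (sq_nonneg π),
      mul_nonneg (mul_nonneg h0' h0) (by linarith : (0:ℝ) ≤ π - x)]

lemma abs_cubic_le_sin {x : ℝ} (h0 : -π ≤ x) (h1 : x ≤ π) :
    |x| * (|x - π| * |x + π|) ≤ π ^ 3 * |Real.sin x| := by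
  rcases le_or_gt 0 x with hx | hx
  · rw [abs_of_nonneg hx, abs_of_nonpos (by linarith : x - π ≤ 0),
      abs_of_nonneg (by linarith : 0 ≤ x + π),
      abs_of_nonneg (Real.sin_nonneg_of_nonneg_of_le_pi hx h1)]
    have := sin_cubic_lower hx h1
    nlinarith [this]
  · have h2 := sin_cubic_lower (by linarith : (0:ℝ) ≤ -x) (by linarith : -x ≤ π)
    rw [Real.sin_neg] at h2
    rw [abs_of_neg hx, abs_of_nonpos (by linarith : x - π ≤ 0),
      abs_of_nonneg (by linarith : 0 ≤ x + π),
      abs_of_nonpos (Real.sin_nonpos_of_nonpos_of_neg_pi_le hx.le h0)]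
    nlinarith [h2]

lemma integrableOn_log_abs_sin :
    IntegrableOn (fun x => Real.log |Real.sin x|) (Set.Icc (-π) π) volume := by
  have hπ := Real.pi_gt_three
  have hlogπ : 0 ≤ Real.log π := Real.log_nonneg (by linarith)
  set g : ℝ → ℝ := fun x =>
    3 * Real.log π + (|Real.log (abs x)| + |Real.log (abs (x - π))|
      + |Real.log (abs (x + π))|) with hg
  have hgint : IntegrableOn g (Set.Icc (-π) π) volume := by
    apply Integrable.add
    · exact integrableOn_const measure_Icc_lt_top.ne
    · apply Integrable.add
      · apply Integrable.add
        · simpa using (integrableOn_log_abs_sub 0 (-π) π).abs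
        · exact (integrableOn_log_abs_sub π (-π) π).abs
      · simpa [sub_neg_eq_add] using (integrableOn_log_abs_sub (-π) (-π) π).abs
  have hnull : (volume.restrict (Set.Icc (-π) π)) {x : ℝ | x = 0 ∨ x = π ∨ x = -π} = 0 := by
    have h0 : volume ({x : ℝ | x = 0 ∨ x = π ∨ x = -π}) = 0 := by
      have : {x : ℝ | x = 0 ∨ x = π ∨ x = -π} = {0, π, -π} := by
        ext y; simp [Set.mem_insert_iff]
      rw [this]
      exact Set.Countable.measure_zero (Set.Countable.insert _ (Set.Countable.insert _
        (Set.countable_singleton _))) _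
    exact le_antisymm (le_trans (Measure.restrict_apply_le _ _) h0.le) zero_le
  refine Integrable.mono hgint ?_ ?_
  · exact (Real.measurable_log.comp (measurable_abs.comp Real.measurable_sin)).aestronglyMeasurable
  · filter_upwards [ae_restrict_mem measurableSet_Icc,
      (ae_iff (p := fun x : ℝ => ¬(x = 0 ∨ x = π ∨ x = -π))).2 (by
        convert hnull using 2
        ext a
        simp only [Set.mem_setOf_eq, not_not])]
      with x hx hxne
    push_neg at hxne
    obtain ⟨hx0, hxπ, hxmπ⟩ := hxne
    have hx1 : 0 < |x| := abs_pos.2 hx0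
    have hx2 : 0 < |x - π| := abs_pos.2 (sub_ne_zero.2 hxπ)
    have hx3 : 0 < |x + π| := abs_pos.2 (by intro h; apply hxmπ; linarith)
    have hcubic := abs_cubic_le_sin hx.1 hx.2
    have hsin : 0 < |Real.sin x| := by
      by_contra h
      push_neg at h
      have : |Real.sin x| = 0 := le_antisymm h (abs_nonneg _)
      rw [this, mul_zero] at hcubic
      nlinarith [mul_pos hx1 (mul_pos hx2 hx3)]
    have hlog1 : Real.log (|x| * (|x - π| * |x + π|)) ≤ Real.log (π ^ 3 * |Real.sin x|) :=
      Real.log_le_log (by positivity) hcubic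
    rw [Real.log_mul hx1.ne' (by positivity), Real.log_mul hx2.ne' hx3.ne',
      Real.log_mul (by positivity) hsin.ne', Real.log_pow] at hlog1
    have hup : Real.log |Real.sin x| ≤ 0 :=
      Real.log_nonpos (abs_nonneg _) (Real.abs_sin_le_one x)
    rw [Real.norm_eq_abs, Real.norm_eq_abs, abs_of_nonpos hup, hg]
    have hgnn : 0 ≤ 3 * Real.log π + (|Real.log (abs x)| + |Real.log (abs (x - π))|
        + |Real.log (abs (x + π))|) := by
      positivity
    rw [abs_of_nonneg hgnn]
    have h1 := neg_abs_le (Real.log |x|)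
    have h2 := neg_abs_le (Real.log |x - π|)
    have h3 := neg_abs_le (Real.log |x + π|)
    push_cast at hlog1
    linarith

lemma restrict_box_eq :
    (volume.restrict (Set.Icc (-π) π)).prod (volume.restrict (Set.Icc (-π) π))
      = volume.restrict box := by
  rw [Measure.prod_restrict, box, ← Measure.volume_eq_prod]

lemma sin_zero_null : volume {k : ℝ × ℝ | Real.sin k.1 = 0 ∨ Real.sin k.2 = 0} = 0 := by
  have hS : volume {x : ℝ | Real.sin x = 0} = 0 := by
    refine measure_mono_null (fun x hx => ?_)
      ((Set.countable_range (fun n : ℤ => (n : ℝ) * π)).measure_zero _)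
    obtain ⟨n, hn⟩ := Real.sin_eq_zero_iff.1 hx
    exact ⟨n, hn⟩
  have h1 : {k : ℝ × ℝ | Real.sin k.1 = 0 ∨ Real.sin k.2 = 0}
      = ({x : ℝ | Real.sin x = 0} ×ˢ Set.univ) ∪ (Set.univ ×ˢ {x : ℝ | Real.sin x = 0}) := by
    ext k; simp [Set.mem_prod]
  rw [h1]
  apply measure_union_null
  · rw [Measure.volume_eq_prod, Measure.prod_prod, hS, zero_mul]
  · rw [Measure.volume_eq_prod, Measure.prod_prod, hS, mul_zero]

lemma diag_null : volume {k : ℝ × ℝ | k.2 = k.1 ∨ k.2 = -k.1} = 0 := by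
  have h1 : {k : ℝ × ℝ | k.2 = k.1 ∨ k.2 = -k.1}
      = {k : ℝ × ℝ | k.2 = k.1} ∪ {k : ℝ × ℝ | k.2 = -k.1} := by
    ext k; simp [Set.mem_union]
  rw [h1]
  apply measure_union_null
  · have hm : MeasurableSet {k : ℝ × ℝ | k.2 = k.1} :=
      (isClosed_eq continuous_snd continuous_fst).measurableSet
    rw [Measure.volume_eq_prod, Measure.prod_apply hm]
    have : ∀ x : ℝ, (Prod.mk x ⁻¹' {k : ℝ × ℝ | k.2 = k.1}) = {x} := by
      intro x; ext y; simp [eq_comm]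
    simp [this]
  · have hm : MeasurableSet {k : ℝ × ℝ | k.2 = -k.1} :=
      (isClosed_eq continuous_snd continuous_fst.neg).measurableSet
    rw [Measure.volume_eq_prod, Measure.prod_apply hm]
    have : ∀ x : ℝ, (Prod.mk x ⁻¹' {k : ℝ × ℝ | k.2 = -k.1}) = {-x} := by
      intro x; ext y; simp
    simp [this]

lemma measurable_log_D (γ φ : ℝ) : Measurable (fun k => Real.log (D γ φ k)) := by
  have hD : Continuous (fun k : ℝ × ℝ => 4 - 4 * (Real.cos k.1 * Real.cos k.2)
      + 2 * (γ * Real.cos φ) * (Real.cos k.2 - Real.cos k.1)) := by fun_prop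
  have he : (fun k => Real.log (D γ φ k)) = fun k : ℝ × ℝ =>
      Real.log (4 - 4 * (Real.cos k.1 * Real.cos k.2)
        + 2 * (γ * Real.cos φ) * (Real.cos k.2 - Real.cos k.1)) := by
    funext k; rw [D_eq]
  rw [he]
  exact Real.measurable_log.comp hD.measurable

lemma integrableOn_log_D {γ : ℝ} (hγ0 : 0 ≤ γ) (hγ2 : γ < 2) (φ : ℝ) :
    IntegrableOn (fun k => Real.log (D γ φ k)) box volume := by
  set c0 : ℝ := |Real.log 16| + |Real.log (4 * (1 - γ / 2))| with hc0
  set G : ℝ × ℝ → ℝ := fun k =>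
    c0 + (|Real.log (abs (Real.sin k.1))| * 1 + 1 * |Real.log (abs (Real.sin k.2))|) with hG
  have hGint : IntegrableOn G box volume := by
    rw [IntegrableOn, ← restrict_box_eq]
    apply Integrable.add
    · apply integrable_const_iff.2
      right
      constructor
      rw [← Set.univ_prod_univ, Measure.prod_prod]
      refine ENNReal.mul_lt_top ?_ ?_ <;>
        · rw [Measure.restrict_apply_univ]; exact measure_Icc_lt_top
    · apply Integrable.add
      · exact Integrable.mul_prod integrableOn_log_abs_sin.abs
          (integrable_const_iff.2 (Or.inr ⟨by
            rw [Measure.restrict_apply_univ]; exact measure_Icc_lt_top⟩))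
      · exact Integrable.mul_prod
          ((integrable_const_iff (μ := volume.restrict (Set.Icc (-π) π))).2 (Or.inr ⟨by
            rw [Measure.restrict_apply_univ]; exact measure_Icc_lt_top⟩))
          integrableOn_log_abs_sin.abs
  refine Integrable.mono hGint (measurable_log_D γ φ).aestronglyMeasurable ?_
  have hnull : (volume.restrict box) {k : ℝ × ℝ | Real.sin k.1 = 0 ∨ Real.sin k.2 = 0} = 0 :=
    le_antisymm (le_trans (Measure.restrict_apply_le _ _) sin_zero_null.le) zero_le
  filter_upwards [(ae_iff (p := fun k : ℝ × ℝ =>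
      ¬(Real.sin k.1 = 0 ∨ Real.sin k.2 = 0))).2 (by
        convert hnull using 2
        ext a
        simp only [Set.mem_setOf_eq, not_not])] with k hk
  push_neg at hk
  obtain ⟨hs1, hs2⟩ := hk
  have ha1 : 0 < |Real.sin k.1| := abs_pos.2 hs1
  have ha2 : 0 < |Real.sin k.2| := abs_pos.2 hs2
  have hb := D_bounds φ hγ0 hγ2.le k
  have hconst : (0:ℝ) < 4 * (1 - γ / 2) := by linarith
  have hDpos : 0 < D γ φ k := by
    have hp : (0:ℝ) < (1 - γ / 2) * (4 * (|Real.sin k.1| * |Real.sin k.2|)) :=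
      mul_pos (by linarith) (by positivity)
    linarith [hb.1]
  have hlow : Real.log (4 * (1 - γ / 2)) + Real.log |Real.sin k.1| + Real.log |Real.sin k.2|
      ≤ Real.log (D γ φ k) := by
    have h1 : (4 * (1 - γ / 2)) * (|Real.sin k.1| * |Real.sin k.2|) ≤ D γ φ k := by
      have := hb.1; nlinarith [this]
    have h2 := Real.log_le_log (by positivity) h1
    rw [Real.log_mul (by positivity) (by positivity),
      Real.log_mul ha1.ne' ha2.ne'] at h2
    linarith
  have hup : Real.log (D γ φ k) ≤ Real.log 16 := Real.log_le_log hDpos hb.2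
  rw [Real.norm_eq_abs, Real.norm_eq_abs]
  have hGnn : 0 ≤ G k := by
    rw [hG, hc0]; positivity
  rw [abs_of_nonneg hGnn, hG, hc0]
  simp only [mul_one, one_mul]
  have e1 := le_abs_self (Real.log 16)
  have e2 := neg_abs_le (Real.log (4 * (1 - γ / 2)))
  have e3 := neg_abs_le (Real.log |Real.sin k.1|)
  have e4 := neg_abs_le (Real.log |Real.sin k.2|)
  rcases abs_cases (Real.log (D γ φ k)) with ⟨h, _⟩ | ⟨h, _⟩ <;> rw [h] <;>
    [linarith [abs_nonneg (Real.log |Real.sin k.1|), abs_nonneg (Real.log |Real.sin k.2|),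
      abs_nonneg (Real.log (4 * (1 - γ / 2)))];
     linarith [abs_nonneg (Real.log 16)]]

/-- strict Jensen inequality `F(φ*) > a F(0) + (1-a) F(π)` for
`γ ∈ (0,2)`, `a ∈ (0,1)`, `cos φ* = 2a - 1`; in particular `D_k(0)` and `D_k(π)` are
not equal for Lebesgue-almost every `k ∈ [-π,π]²`. -/
theorem strict_jensen (γ a φs : ℝ) (hγ0 : 0 < γ) (hγ2 : γ < 2)
    (ha0 : 0 < a) (ha1 : a < 1) (hφ : φs ∈ Set.Ioc (-π) π)
    (hcos : Real.cos φs = 2 * a - 1) :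
    a * F γ 0 + (1 - a) * F γ π < F γ φs ∧
      ¬ (∀ᵐ k ∂(volume.restrict box), D γ 0 k = D γ π k) := by
  have hπ := Real.pi_pos
  set μ := volume.restrict box with hμ
  have hbox_meas : MeasurableSet box := measurableSet_Icc.prod measurableSet_Icc
  have hint : ∀ φ, Integrable (fun k => Real.log (D γ φ k)) μ :=
    fun φ => integrableOn_log_D hγ0.le hγ2 φ
  have hDconv : ∀ k, D γ φs k = a * D γ 0 k + (1 - a) * D γ π k := by
    intro k
    rw [D_eq, D_eq, D_eq, Real.cos_zero, Real.cos_pi, hcos]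
    ring
  have hnull1 : μ {k : ℝ × ℝ | Real.sin k.1 = 0 ∨ Real.sin k.2 = 0} = 0 :=
    le_antisymm (le_trans (Measure.restrict_apply_le _ _) sin_zero_null.le) zero_le
  have hnull2 : μ {k : ℝ × ℝ | k.2 = k.1 ∨ k.2 = -k.1} = 0 :=
    le_antisymm (le_trans (Measure.restrict_apply_le _ _) diag_null.le) zero_le
  have hae : ∀ᵐ k ∂μ,
      (a * Real.log (D γ 0 k) + (1 - a) * Real.log (D γ π k) < Real.log (D γ φs k))
        ∧ D γ 0 k ≠ D γ π k := by
    filter_upwards [ae_restrict_mem hbox_meas,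
      (ae_iff (p := fun k : ℝ × ℝ => ¬(Real.sin k.1 = 0 ∨ Real.sin k.2 = 0))).2 (by
        convert hnull1 using 2
        ext b
        simp only [Set.mem_setOf_eq, not_not]),
      (ae_iff (p := fun k : ℝ × ℝ => ¬(k.2 = k.1 ∨ k.2 = -k.1))).2 (by
        convert hnull2 using 2
        ext b
        simp only [Set.mem_setOf_eq, not_not])] with k hk h1 h2
    push_neg at h1 h2
    obtain ⟨hs1, hs2⟩ := h1
    obtain ⟨hd1, hd2⟩ := h2
    obtain ⟨hk1, hk2⟩ := hk
    have hDpos : ∀ φ', 0 < D γ φ' k := by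
      intro φ'
      have hb := D_bounds φ' hγ0.le hγ2.le k
      nlinarith [hb.1, mul_pos (by linarith : (0:ℝ) < 1 - γ / 2)
        (mul_pos (abs_pos.2 hs1) (abs_pos.2 hs2))]
    have hcosne : Real.cos k.1 ≠ Real.cos k.2 := by
      intro h
      have hm1 : |k.1| ∈ Set.Icc 0 π := ⟨abs_nonneg _, abs_le.2 ⟨hk1.1, hk1.2⟩⟩
      have hm2 : |k.2| ∈ Set.Icc 0 π := ⟨abs_nonneg _, abs_le.2 ⟨hk2.1, hk2.2⟩⟩
      have heq : |k.1| = |k.2| :=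
        Real.injOn_cos hm1 hm2 (by rw [Real.cos_abs, Real.cos_abs, h])
      rcases abs_eq_abs.1 heq with h' | h'
      · exact hd1 h'.symm
      · exact hd2 (by linarith)
    have hne : D γ 0 k ≠ D γ π k := by
      intro h
      apply hcosne
      rw [D_eq, D_eq, Real.cos_zero, Real.cos_pi] at h
      have h' : γ * (Real.cos k.2 - Real.cos k.1) = 0 := by nlinarith [h]
      rcases mul_eq_zero.1 h' with h'' | h''
      · exact absurd h'' hγ0.ne'
      · linarith
    refine ⟨?_, hne⟩
    have hstrict := strictConcaveOn_log_Ioi.2 (Set.mem_Ioi.2 (hDpos 0))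
      (Set.mem_Ioi.2 (hDpos π)) hne ha0 (by linarith : (0:ℝ) < 1 - a) (by ring)
    rw [smul_eq_mul, smul_eq_mul, smul_eq_mul, smul_eq_mul] at hstrict
    rw [hDconv k]
    exact hstrict
  have hμuniv : μ Set.univ = volume box := Measure.restrict_apply_univ _
  have hvol : 0 < volume box := by
    rw [box, Measure.volume_eq_prod, Measure.prod_prod, Real.volume_Icc]
    have h2π : (0:ℝ) < π - (-π) := by linarith
    exact ENNReal.mul_pos (ENNReal.ofReal_pos.2 h2π).ne' (ENNReal.ofReal_pos.2 h2π).ne'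
  set f : ℝ × ℝ → ℝ := fun k => Real.log (D γ φs k)
    - (a * Real.log (D γ 0 k) + (1 - a) * Real.log (D γ π k)) with hf
  have hintsum : Integrable (fun k => a * Real.log (D γ 0 k)
      + (1 - a) * Real.log (D γ π k)) μ :=
    ((hint 0).const_mul a).add ((hint π).const_mul (1 - a))
  have hfint : Integrable f μ := (hint φs).sub hintsum
  have hf_pos_ae : ∀ᵐ k ∂μ, 0 < f k := hae.mono fun k hk => sub_pos.2 hk.1
  have hintpos : 0 < ∫ k, f k ∂μ := by
    refine (integral_pos_iff_support_of_nonneg_ae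
      (hf_pos_ae.mono fun k hk => hk.le) hfint).2 ?_
    have hcnull : μ (Function.support f)ᶜ = 0 := by
      refine measure_mono_null (fun k hk => ?_) (ae_iff.1 hf_pos_ae)
      have h0 : f k = 0 := Function.notMem_support.1 hk
      simp [h0]
    have hle : μ Set.univ ≤ μ (Function.support f) + μ (Function.support f)ᶜ := by
      calc μ Set.univ = μ (Function.support f ∪ (Function.support f)ᶜ) := by
            rw [Set.union_compl_self]
        _ ≤ _ := measure_union_le _ _
    rw [hcnull, add_zero] at hle
    exact lt_of_lt_of_le (hμuniv ▸ hvol) hle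
  have hμne : μ ≠ 0 := by
    intro h
    rw [h] at hμuniv
    simp only [Measure.coe_zero, Pi.zero_apply] at hμuniv
    exact hvol.ne' hμuniv.symm
  constructor
  · have hsplit : ∫ k, f k ∂μ = (∫ k, Real.log (D γ φs k) ∂μ)
        - (a * ∫ k, Real.log (D γ 0 k) ∂μ + (1 - a) * ∫ k, Real.log (D γ π k) ∂μ) := by
      rw [hf, integral_sub (hint φs) hintsum,
        integral_add ((hint 0).const_mul a) ((hint π).const_mul (1 - a)),
        integral_const_mul, integral_const_mul]
    have hlt : a * (∫ k, Real.log (D γ 0 k) ∂μ) + (1 - a) * (∫ k, Real.log (D γ π k) ∂μ)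
        < ∫ k, Real.log (D γ φs k) ∂μ := by
      rw [hsplit] at hintpos
      linarith
    have hC : (0:ℝ) < (1/2) * ((2*π)^2)⁻¹ := by positivity
    simp only [F, hμ]
    nlinarith [mul_lt_mul_of_pos_left hlt hC]
  · intro hcontra
    have hboth := hcontra.and (hae.mono fun k hk => hk.2)
    have : (ae μ).NeBot := ae_neBot.2 hμne
    obtain ⟨k, hk1, hk2⟩ := hboth.exists
    exact hk2 hk1

end
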